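/- Let β : 3^U → ℝ ∪ {+∞} be a bisubmodular function reducible to a t-monotone submodular function ρ : 2^{U^±} → ℝ ∪ {+∞}. Then the bisubmodular flow instance ((U,E;∂), c̲, c̄, β) has a feasible flow if and only if the associated submodular flow instance ((U^±, A), b̲, b̄, ρ) has a feasible flow. -/
import Mathlib


open Finset

/-- The indicator vector `χ_i ∈ ℤ^U`. -/
def chi {U : Type*} [DecidableEq U] (i : U) : U → ℤ := fun j => if j = i then 1 else 0

/-- Sign of a boolean: `true ↦ +1`, `false ↦ −1`. -/
def sgn (b : Bool) : ℤ := if b then 1 else -1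

/-- Boundary operator of a bidirected graph given by signed endpoints:
for `e` with endpoints `(i, σ_i), (j, σ_j)`, `∂e = σ_i χ_i + σ_j χ_j`. -/
def bdOf {U E : Type*} [DecidableEq U] (ep : E → (U × Bool) × (U × Bool)) :
    E → U → ℤ :=
  fun e u => sgn (ep e).1.2 * chi (ep e).1.1 u + sgn (ep e).2.2 * chi (ep e).2.1 u

/-- No self-loops of type `χ_i − χ_i`: a loop must have both signs equal. -/
def NoBadLoops {U E : Type*} (ep : E → (U × Bool) × (U × Bool)) : Prop :=
  ∀ e, (ep e).1.1 = (ep e).2.1 → (ep e).1.2 = (ep e).2.2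

/-- `Y⁺` in the signed extension `U^± = U × Bool` (`true` = `+`). -/
def posPart {U : Type*} [DecidableEq U] (Y : Finset U) : Finset (U × Bool) :=
  Y.image (fun i => (i, true))

/-- `Z⁻`. -/
def negPart {U : Type*} [DecidableEq U] (Z : Finset U) : Finset (U × Bool) :=
  Z.image (fun i => (i, false))

/-- `X̲`: remove from `X ⊆ U^±` all pairs `{i⁺, i⁻} ⊆ X`. -/
def reduceSigned {U : Type*} [DecidableEq U] (X : Finset (U × Bool)) :
    Finset (U × Bool) :=
  X.filter (fun p => ¬((p.1, true) ∈ X ∧ (p.1, false) ∈ X))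

/-- t-monotonicity. -/
def TMono {U : Type*} [DecidableEq U] (ρ : Finset (U × Bool) → EReal) : Prop :=
  ∀ X : Finset (U × Bool), ρ (reduceSigned X) ≤ ρ X

/-- Submodularity (with `ρ ∅ = 0`). -/
def Submodular {U : Type*} [DecidableEq U] (ρ : Finset U → EReal) : Prop :=
  ρ ∅ = 0 ∧ ∀ X Y : Finset U, ρ (X ∩ Y) + ρ (X ∪ Y) ≤ ρ X + ρ Y

/-- Membership in the base polyhedron `B(ρ)`. -/
def InBase {U : Type*} [Fintype U] (ρ : Finset U → EReal) (x : U → ℝ) : Prop :=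
  ((∑ i, x i : ℝ) : EReal) = ρ univ ∧
    ∀ X : Finset U, ((∑ i ∈ X, x i : ℝ) : EReal) ≤ ρ X

/-- The projection `Φ`. -/
noncomputable def Phi {U : Type*} (x : U × Bool → ℝ) : U → ℝ :=
  fun i => (x (i, true) - x (i, false)) / 2

/-- The lift `Ψ`. -/
noncomputable def Psi {U : Type*} (z : U → ℝ) : U × Bool → ℝ :=
  fun p => if p.2 then z p.1 else -z p.1

/-- Membership in the bisubmodular polyhedron `D(β)`. -/
def InBisubPoly {U : Type*} [Fintype U] [DecidableEq U]
    (β : Finset U → Finset U → EReal) (z : U → ℝ) : Prop :=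
  ∀ Y Z : Finset U, Disjoint Y Z →
    ((∑ i ∈ Y, z i - ∑ i ∈ Z, z i : ℝ) : EReal) ≤ β Y Z

/-- The boundary `∇ψ = Σ_e ψ(e) ∂e` of a bidirected flow. -/
def BFBoundary {U E : Type*} [Fintype E] (bd : E → U → ℤ) (ψ : E → ℝ) : U → ℝ :=
  fun u => ∑ e, ψ e * (bd e u : ℝ)

/-- Feasibility for the bisubmodular flow instance. -/
def BFFeasible {U E : Type*} [Fintype U] [Fintype E] [DecidableEq U]
    (bd : E → U → ℤ) (clow cup : E → EReal) (β : Finset U → Finset U → EReal)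
    (ψ : E → ℝ) : Prop :=
  InBisubPoly β (BFBoundary bd ψ) ∧
    ∀ e, clow e ≤ ((ψ e : ℝ) : EReal) ∧ ((ψ e : ℝ) : EReal) ≤ cup e

/-- Tail of the arcs of the associated submodular flow instance:
arc `(e, true)` is `i^{σ_i} → j^{−σ_j}`, arc `(e, false)` is `j^{σ_j} → i^{−σ_i}`. -/
def assocTail {U E : Type*} (ep : E → (U × Bool) × (U × Bool)) :
    E × Bool → U × Bool :=
  fun a => if a.2 then (ep a.1).1 else (ep a.1).2

/-- Head of the arcs of the associated submodular flow instance. -/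
def assocHead {U E : Type*} (ep : E → (U × Bool) × (U × Bool)) :
    E × Bool → U × Bool :=
  fun a => if a.2 then ((ep a.1).2.1, !(ep a.1).2.2) else ((ep a.1).1.1, !(ep a.1).1.2)

/-- Boundary of a flow on a directed graph given by `tail`/`head` maps. -/
def SFBoundary {U A : Type*} [Fintype A] [DecidableEq U]
    (tail head : A → U) (φ : A → ℝ) (u : U) : ℝ :=
  ∑ a ∈ univ.filter (fun a => tail a = u), φ a -
    ∑ a ∈ univ.filter (fun a => head a = u), φ a

/-- Feasibility for the submodular flow instance. -/
def SFFeasible {U A : Type*} [Fintype U] [Fintype A] [DecidableEq U]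
    (tail head : A → U) (blow bup : A → EReal) (ρ : Finset U → EReal)
    (φ : A → ℝ) : Prop :=
  InBase ρ (SFBoundary tail head φ) ∧
    ∀ a, blow a ≤ ((φ a : ℝ) : EReal) ∧ ((φ a : ℝ) : EReal) ≤ bup a


section Aux

variable {U : Type*} [DecidableEq U]

lemma mem_posPart {Y : Finset U} {p : U × Bool} :
    p ∈ posPart Y ↔ p.1 ∈ Y ∧ p.2 = true := by
  obtain ⟨u, b⟩ := p
  simp only [_root_.posPart, Finset.mem_image, Prod.ext_iff]
  aesop

lemma mem_negPart {Z : Finset U} {p : U × Bool} :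
    p ∈ negPart Z ↔ p.1 ∈ Z ∧ p.2 = false := by
  obtain ⟨u, b⟩ := p
  simp only [_root_.negPart, Finset.mem_image, Prod.ext_iff]
  aesop

lemma sum_pos_neg (z : U → ℝ) (Y Z : Finset U) :
    ∑ p ∈ posPart Y ∪ negPart Z, Psi z p = ∑ i ∈ Y, z i - ∑ i ∈ Z, z i := by
  rw [Finset.sum_union]
  · rw [_root_.posPart, _root_.negPart, Finset.sum_image (by simp), Finset.sum_image (by simp)]
    simp [Psi, sub_eq_add_neg, Finset.sum_neg_distrib]
  · rw [Finset.disjoint_left]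
    intro p hp hq
    rw [mem_posPart] at hp
    rw [mem_negPart] at hq
    simp_all

variable [Fintype U]

/-- Elements `u` with `(u, true) ∈ X`. -/
def fT (X : Finset (U × Bool)) : Finset U := univ.filter (fun u => (u, true) ∈ X)

/-- Elements `u` with `(u, false) ∈ X`. -/
def fF (X : Finset (U × Bool)) : Finset U := univ.filter (fun u => (u, false) ∈ X)

lemma X_decomp (X : Finset (U × Bool)) :
    X = posPart (fT X) ∪ negPart (fF X) := by
  ext ⟨u, b⟩
  cases b <;> simp [mem_posPart, mem_negPart, fT, fF]

lemma reduce_decomp (X : Finset (U × Bool)) :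
    reduceSigned X = posPart (fT X \ fF X) ∪ negPart (fF X \ fT X) := by
  ext ⟨u, b⟩
  cases b <;> simp [reduceSigned, mem_posPart, mem_negPart, fT, fF] <;> tauto

lemma psi_inBase {β : Finset U → Finset U → EReal} {ρ : Finset (U × Bool) → EReal}
    (hρmono : TMono ρ) (hρuniv : ρ univ = 0)
    (hβρ : ∀ Y Z : Finset U, Disjoint Y Z → β Y Z = ρ (posPart Y ∪ negPart Z))
    {z : U → ℝ} (hz : InBisubPoly β z) : InBase ρ (Psi z) := by
  constructor
  · have hzero : ∑ p : U × Bool, Psi z p = 0 := by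
      rw [Fintype.sum_prod_type]
      refine Finset.sum_eq_zero fun u _ => ?_
      rw [Fintype.sum_bool]
      simp [Psi]
    rw [hzero, hρuniv]
    simp
  · intro X
    have hd : Disjoint (fT X \ fF X) (fF X \ fT X) := by
      rw [Finset.disjoint_left]
      intro a ha hb
      rw [Finset.mem_sdiff] at ha hb
      tauto
    have e1 : ∑ p ∈ X, Psi z p = ∑ i ∈ fT X, z i - ∑ i ∈ fF X, z i := by
      conv_lhs => rw [X_decomp X]
      exact sum_pos_neg z _ _
    have e2 : ∑ i ∈ fT X, z i - ∑ i ∈ fF X, z i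
        = ∑ i ∈ fT X \ fF X, z i - ∑ i ∈ fF X \ fT X, z i := by
      have a1 := Finset.sum_inter_add_sum_sdiff (fT X) (fF X) z
      have a2 := Finset.sum_inter_add_sum_sdiff (fF X) (fT X) z
      rw [Finset.inter_comm] at a2
      linarith
    calc ((∑ p ∈ X, Psi z p : ℝ) : EReal)
        = ((∑ i ∈ fT X \ fF X, z i - ∑ i ∈ fF X \ fT X, z i : ℝ) : EReal) := by
          rw [e1, e2]
      _ ≤ β (fT X \ fF X) (fF X \ fT X) := hz _ _ hd
      _ = ρ (posPart (fT X \ fF X) ∪ negPart (fF X \ fT X)) := hβρ _ _ hd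
      _ = ρ (reduceSigned X) := by rw [← reduce_decomp]
      _ ≤ ρ X := hρmono X

lemma inBisub_of_psi {β : Finset U → Finset U → EReal} {ρ : Finset (U × Bool) → EReal}
    (hβρ : ∀ Y Z : Finset U, Disjoint Y Z → β Y Z = ρ (posPart Y ∪ negPart Z))
    {z : U → ℝ} (hz : InBase ρ (Psi z)) : InBisubPoly β z := by
  intro Y Z hYZ
  rw [hβρ Y Z hYZ, ← sum_pos_neg z Y Z]
  exact hz.2 _

lemma chi_apply {U : Type*} [DecidableEq U] (i u : U) :
    chi i u = if i = u then 1 else 0 := by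
  by_cases h : i = u
  · simp [chi, h]
  · simp [chi, h, Ne.symm h]

lemma SFB_as_sum {W A : Type*} [Fintype A] [DecidableEq W]
    (tail head : A → W) (φ : A → ℝ) (u : W) :
    SFBoundary tail head φ u
      = ∑ a, ((if tail a = u then φ a else 0) - (if head a = u then φ a else 0)) := by
  rw [SFBoundary, Finset.sum_filter, Finset.sum_filter, ← Finset.sum_sub_distrib]

lemma bnd1 {E : Type*} [Fintype E]
    (ep : E → (U × Bool) × (U × Bool)) (ψ : E → ℝ) (p : U × Bool) :
    SFBoundary (assocTail ep) (assocHead ep) (fun a => ψ a.1) p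
      = Psi (BFBoundary (bdOf ep) ψ) p := by
  obtain ⟨u, s⟩ := p
  rw [SFB_as_sum, Fintype.sum_prod_type]
  have hR : Psi (BFBoundary (bdOf ep) ψ) (u, s)
      = ∑ e, (if s then ψ e * ((bdOf ep e u : ℤ) : ℝ) else -(ψ e * ((bdOf ep e u : ℤ) : ℝ))) := by
    cases s <;> simp [Psi, BFBoundary]
  rw [hR]
  refine Finset.sum_congr rfl fun e _ => ?_
  rcases hep : ep e with ⟨⟨i, si⟩, ⟨j, sj⟩⟩
  rw [Fintype.sum_bool]
  simp only [assocTail, assocHead, bdOf, hep]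
  cases si <;> cases sj <;> cases s <;>
    by_cases hi : i = u <;> by_cases hj : j = u <;>
      simp [chi_apply, sgn, hi, hj, Prod.ext_iff] <;> ring

lemma bnd2 {E : Type*} [Fintype E]
    (ep : E → (U × Bool) × (U × Bool)) (φ : E × Bool → ℝ) (u : U) :
    BFBoundary (bdOf ep) (fun e => (φ (e, true) + φ (e, false)) / 2) u
      = Phi (SFBoundary (assocTail ep) (assocHead ep) φ) u := by
  show _ = (SFBoundary (assocTail ep) (assocHead ep) φ (u, true)
      - SFBoundary (assocTail ep) (assocHead ep) φ (u, false)) / 2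
  rw [SFB_as_sum, SFB_as_sum, ← Finset.sum_sub_distrib, Fintype.sum_prod_type,
    Finset.sum_div]
  rw [BFBoundary]
  refine Finset.sum_congr rfl fun e _ => ?_
  rcases hep : ep e with ⟨⟨i, si⟩, ⟨j, sj⟩⟩
  rw [Fintype.sum_bool]
  simp only [assocTail, assocHead, bdOf, hep]
  cases si <;> cases sj <;>
    by_cases hi : i = u <;> by_cases hj : j = u <;>
      simp [chi_apply, sgn, hi, hj, Prod.ext_iff] <;> ring

end Aux

/-- **Reducible bisubmodular flow ↔ associated submodular flow (feasibility).**
If the bisubmodular function `β` is reducible to the t-monotone submodular function `ρ`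
on the signed extension, then the bisubmodular flow instance has a feasible flow iff the
associated submodular flow instance has a feasible flow. -/
theorem reducible_BF_feasible_iff_SF_feasible
    {U E : Type*} [Fintype U] [DecidableEq U] [Fintype E]
    (ep : E → (U × Bool) × (U × Bool)) (hloops : NoBadLoops ep)
    (clow cup : E → EReal) (β : Finset U → Finset U → EReal)
    (ρ : Finset (U × Bool) → EReal)
    (hclow : ∀ e, clow e ≠ ⊤) (hcup : ∀ e, cup e ≠ ⊥) (hcap : ∀ e, clow e ≤ cup e)
    (hρsub : Submodular ρ) (hρbot : ∀ X, ρ X ≠ ⊥) (hρmono : TMono ρ)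
    (hρuniv : ρ univ = 0)
    (hclosed : ∀ x : U × Bool → ℝ, InBase ρ x → InBase ρ (Psi (Phi x)))
    (hβρ : ∀ Y Z : Finset U, Disjoint Y Z → β Y Z = ρ (posPart Y ∪ negPart Z)) :
    (∃ ψ : E → ℝ, BFFeasible (bdOf ep) clow cup β ψ) ↔
      (∃ φ : E × Bool → ℝ,
        SFFeasible (assocTail ep) (assocHead ep)
          (fun a => clow a.1) (fun a => cup a.1) ρ φ) := by
  constructor
  · rintro ⟨ψ, hψD, hψc⟩
    refine ⟨fun a => ψ a.1, ?_, fun a => hψc a.1⟩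
    have hfun : SFBoundary (assocTail ep) (assocHead ep) (fun a : E × Bool => ψ a.1)
        = Psi (BFBoundary (bdOf ep) ψ) := funext (bnd1 ep ψ)
    rw [hfun]
    exact psi_inBase hρmono hρuniv hβρ hψD
  · rintro ⟨φ, hφB, hφc⟩
    refine ⟨fun e => (φ (e, true) + φ (e, false)) / 2, ?_, fun e => ⟨?_, ?_⟩⟩
    · have hfun : BFBoundary (bdOf ep) (fun e => (φ (e, true) + φ (e, false)) / 2)
          = Phi (SFBoundary (assocTail ep) (assocHead ep) φ) := funext (bnd2 ep φ)
      rw [hfun]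
      exact inBisub_of_psi hβρ (hclosed _ hφB)
    · rcases le_total (φ (e, true)) (φ (e, false)) with h | h
      · refine le_trans (hφc (e, true)).1 ?_
        exact_mod_cast (by linarith : φ (e, true) ≤ (φ (e, true) + φ (e, false)) / 2)
      · refine le_trans (hφc (e, false)).1 ?_
        exact_mod_cast (by linarith : φ (e, false) ≤ (φ (e, true) + φ (e, false)) / 2)
    · rcases le_total (φ (e, true)) (φ (e, false)) with h | h
      · refine le_trans ?_ (hφc (e, false)).2
        exact_mod_cast (by linarith : (φ (e, true) + φ (e, false)) / 2 ≤ φ (e, false))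
      · refine le_trans ?_ (hφc (e, true)).2
        exact_mod_cast (by linarith : (φ (e, true) + φ (e, false)) / 2 ≤ φ (e, true))
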